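/- arXiv:2302.11076 — 3 statements merged into one kernel-verified Lean document; each statement's English description precedes it below -/
import Mathlib

section
/- Let L_H, σ, δ_g, δ_H, ε_g, K_H > 0 with σ ≥ L_H, ‖G‖ ≥ ε_g, and ‖η_C‖ ≥ (1/(2σ))(√(K_H² + 4σ‖G‖) − K_H). Assume δ_g ≤ (1−τ)(√(K_H²+4L_H ε_g) − K_H)²/(48 L_H) and δ_H ≤ (1−τ)(√(K_H²+4L_H ε_g) − K_H)/12 for some τ ∈ (0,1). Then for any s ≥ 0 with s ≥ ‖η_C‖, (L_H/6 − σ/3)s³ + δ_g s + (δ_H/2)s² ≤ 0, and for any s ≤ ‖η_C‖, (L_H/6 − σ/3)s³ + δ_g s + (δ_H/2)s² ≤ δ_g‖η_C‖ + (δ_H/2)‖η_C‖². -/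
set_option maxHeartbeats 1000000


theorem cauchy_step_model_bound
    (L_H σ δg δH εg K_H τ nG nC : ℝ)
    (hL : 0 < L_H) (hσ : 0 < σ) (hδg : 0 < δg) (hδH : 0 < δH) (hεg : 0 < εg)
    (hK : 0 < K_H) (hτ : τ ∈ Set.Ioo (0 : ℝ) 1)
    (hσL : L_H ≤ σ) (hG : εg ≤ nG)
    (hC : (1 / (2 * σ)) * (Real.sqrt (K_H ^ 2 + 4 * σ * nG) - K_H) ≤ nC)
    (hδg_le : δg ≤ (1 - τ) * (Real.sqrt (K_H ^ 2 + 4 * L_H * εg) - K_H) ^ 2 / (48 * L_H))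
    (hδH_le : δH ≤ (1 - τ) * (Real.sqrt (K_H ^ 2 + 4 * L_H * εg) - K_H) / 12) :
    (∀ s : ℝ, 0 ≤ s → nC ≤ s →
        (L_H / 6 - σ / 3) * s ^ 3 + δg * s + δH / 2 * s ^ 2 ≤ 0) ∧
    (∀ s : ℝ, 0 ≤ s → s ≤ nC →
        (L_H / 6 - σ / 3) * s ^ 3 + δg * s + δH / 2 * s ^ 2 ≤ δg * nC + δH / 2 * nC ^ 2) := by
  obtain ⟨hτ0, hτ1⟩ := hτ
  set u := Real.sqrt (K_H ^ 2 + 4 * σ * nG) with hu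
  set v := Real.sqrt (K_H ^ 2 + 4 * L_H * εg) with hv
  have hGpos : 0 < nG := lt_of_lt_of_le hεg hG
  have hu2 : u ^ 2 = K_H ^ 2 + 4 * σ * nG := Real.sq_sqrt (by positivity)
  have hv2 : v ^ 2 = K_H ^ 2 + 4 * L_H * εg := Real.sq_sqrt (by positivity)
  have hvK : K_H < v := by
    rw [hv, show K_H ^ 2 + 4 * L_H * εg = K_H ^ 2 + 4 * L_H * εg from rfl]
    have : K_H ^ 2 < K_H ^ 2 + 4 * L_H * εg := by nlinarith
    exact (Real.lt_sqrt hK.le).mpr this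
  have huv : v ≤ u := by
    apply Real.sqrt_le_sqrt
    nlinarith
  have huK : K_H < u := lt_of_lt_of_le hvK huv
  -- key: L_H * (u - K_H)^2 ≥ σ * (v - K_H)^2
  have hinner : εg * ((u + K_H) * (v - K_H)) ≤ nG * ((v + K_H) * (u - K_H)) := by
    have h1 : (u + K_H) * (v - K_H) ≤ (v + K_H) * (u - K_H) := by nlinarith
    have h2 : 0 ≤ (u + K_H) * (v - K_H) := by nlinarith
    calc εg * ((u + K_H) * (v - K_H)) ≤ εg * ((v + K_H) * (u - K_H)) := by nlinarith
      _ ≤ nG * ((v + K_H) * (u - K_H)) := by nlinarith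
  have hid : 4 * εg * nG * (L_H * (u - K_H) ^ 2 - σ * (v - K_H) ^ 2) =
      (u - K_H) * (v - K_H) *
        (nG * ((v + K_H) * (u - K_H)) - εg * ((u + K_H) * (v - K_H))) := by
    have e1 : 4 * L_H * εg = v ^ 2 - K_H ^ 2 := by linarith [hv2]
    have e2 : 4 * σ * nG = u ^ 2 - K_H ^ 2 := by linarith [hu2]
    linear_combination ((u - K_H) ^ 2 * nG) * e1 - ((v - K_H) ^ 2 * εg) * e2
  have hkey : σ * (v - K_H) ^ 2 ≤ L_H * (u - K_H) ^ 2 := by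
    have hpos : 0 < 4 * εg * nG := by positivity
    have hprod : 0 ≤ (u - K_H) * (v - K_H) *
        (nG * ((v + K_H) * (u - K_H)) - εg * ((u + K_H) * (v - K_H))) :=
      mul_nonneg (mul_nonneg (sub_nonneg.2 huK.le) (sub_nonneg.2 hvK.le))
        (sub_nonneg.2 hinner)
    have h0 : 0 ≤ 4 * εg * nG * (L_H * (u - K_H) ^ 2 - σ * (v - K_H) ^ 2) := by
      rw [hid]; exact hprod
    have h1 : 4 * εg * nG * 0 ≤ 4 * εg * nG * (L_H * (u - K_H) ^ 2 - σ * (v - K_H) ^ 2) := by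
      simpa using h0
    have := le_of_mul_le_mul_left h1 hpos
    linarith
  have hCge : (u - K_H) / (2 * σ) ≤ nC := by
    have e : (u - K_H) / (2 * σ) = 1 / (2 * σ) * (u - K_H) := by ring
    rw [e]; exact hC
  have hCpos : 0 < nC :=
    lt_of_lt_of_le (div_pos (sub_pos.2 huK) (by positivity)) hCge
  constructor
  · intro s hs0 hsC
    have hsC' : (u - K_H) / (2 * σ) ≤ s := le_trans hCge hsC
    rw [div_le_iff₀ (by positivity : (0:ℝ) < 2 * σ)] at hsC'
    have hσs : (u - K_H) / 2 ≤ σ * s := by linarith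
    have hσs2 : (u - K_H) ^ 2 / (4 * σ) ≤ σ * s ^ 2 := by
      rw [div_le_iff₀ (by positivity : (0:ℝ) < 4 * σ)]
      nlinarith [hσs, sub_nonneg.2 huK.le]
    have hA2 : (v - K_H) ^ 2 / (4 * L_H) ≤ σ * s ^ 2 := by
      refine le_trans ?_ hσs2
      rw [div_le_div_iff₀ (by positivity) (by positivity)]
      nlinarith [hkey]
    have hδg' : δg ≤ σ / 12 * s ^ 2 := by
      have h1 : δg ≤ (v - K_H) ^ 2 / (48 * L_H) := by
        refine le_trans hδg_le ?_
        rw [div_le_div_iff₀ (by positivity) (by positivity)]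
        nlinarith [mul_nonneg (mul_nonneg hτ0.le (sq_nonneg (v - K_H))) hL.le]
      have h2 : (v - K_H) ^ 2 / (48 * L_H) = ((v - K_H) ^ 2 / (4 * L_H)) / 12 := by
        ring
      rw [h2] at h1
      linarith
    have hδH' : δH ≤ σ / 6 * s := by
      have h1 : δH ≤ (v - K_H) / 12 := by
        refine le_trans hδH_le ?_
        rw [div_le_div_iff₀ (by positivity) (by positivity)]
        nlinarith [mul_nonneg hτ0.le (sub_nonneg.2 hvK.le)]
      have h2 : (v - K_H) / 2 ≤ σ * s := le_trans (by linarith) hσs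
      linarith
    have hg := mul_le_mul_of_nonneg_right hδg' hs0
    have hh := mul_le_mul_of_nonneg_right hδH' (sq_nonneg s)
    have hc : (L_H - σ) * s ^ 3 ≤ 0 :=
      mul_nonpos_of_nonpos_of_nonneg (by linarith) (by positivity)
    linarith [hg, hh, hc]
  · intro s hs0 hsC
    have hcube : 0 ≤ s ^ 3 := by positivity
    have hsq : s ^ 2 ≤ nC ^ 2 := by nlinarith
    nlinarith [hcube, hsq, hsC]
end

section
/- Let m̂(η) = f + ⟨G, η⟩ + ½⟨η, Hη⟩ + (σ/3)‖η‖³ on an inner product space, and suppose η* satisfies ⟨G, η*⟩ + ⟨η*, Hη*⟩ + σ‖η*‖³ = 0 and ⟨η*, Hη*⟩ + σ‖η*‖³ ≥ 0. Then m̂(0) − m̂(η*) ≥ (σ/6)‖η*‖³. -/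
open RealInnerProductSpace

theorem sufficient_function_decrease
    {E : Type*} [NormedAddCommGroup E] [InnerProductSpace ℝ E]
    (mhat : E → ℝ) (f : ℝ) (G : E) (H : E →ₗ[ℝ] E) (σ : ℝ) (hσ : 0 < σ)
    (hsym : ∀ u v : E, ⟪H u, v⟫ = ⟪u, H v⟫)
    (hm : ∀ η : E, mhat η = f + ⟪G, η⟫ + (1 / 2) * ⟪η, H η⟫ + σ / 3 * ‖η‖ ^ 3)
    (ηs : E)
    (h1 : ⟪G, ηs⟫ + ⟪ηs, H ηs⟫ + σ * ‖ηs‖ ^ 3 = 0)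
    (h2 : 0 ≤ ⟪ηs, H ηs⟫ + σ * ‖ηs‖ ^ 3) :
    σ / 6 * ‖ηs‖ ^ 3 ≤ mhat 0 - mhat ηs := by
  have h0 := hm 0
  have hs := hm ηs
  simp at h0
  nlinarith [sq_nonneg (‖ηs‖)]
end

section
/- Let E be a real inner product space and suppose vectors satisfy ‖∇m(η)‖ ≥ ‖P‖ − δ_g − δ_H‖η‖ − (L_H/2 + σ_b)‖η‖², ‖G‖ ≤ δ_g + L_l‖η‖ + ‖P‖, and ‖∇m(η)‖ ≤ θ‖G‖ with θ = κ_θ ∈ (0, 1/6], ‖η‖ ≥ 1, and ‖P‖ ≥ G' − δ_g where G' ≥ ε_g, δ_g ≤ δ_H ≤ κ_θ·ε_g. Then ‖η‖² ≥ (ε_g/2) / (L_H/2 + σ_b + ε_g/6 + L_l/6). -/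
set_option maxHeartbeats 1600000


theorem sufficiently_long_steps_case_norm_ge_one
    {E : Type*} [NormedAddCommGroup E] [InnerProductSpace ℝ E]
    (η P G gm : E) (G' εg δg δH L_H σb L_l κθ : ℝ)
    (hκθ : κθ ∈ Set.Ioc (0 : ℝ) (1 / 6))
    (hL : 0 < L_H) (hσb : 0 < σb) (hLl : 0 < L_l) (hεg : 0 < εg)
    (hη : 1 ≤ ‖η‖)
    (h1 : ‖P‖ - δg - δH * ‖η‖ - (L_H / 2 + σb) * ‖η‖ ^ 2 ≤ ‖gm‖)
    (h2 : ‖G‖ ≤ δg + L_l * ‖η‖ + ‖P‖)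
    (h3 : ‖gm‖ ≤ κθ * ‖G‖)
    (h4 : G' - δg ≤ ‖P‖) (h5 : εg ≤ G')
    (hδ : δg ≤ δH) (hδH : δH ≤ κθ * εg) :
    (εg / 2) / (L_H / 2 + σb + εg / 6 + L_l / 6) ≤ ‖η‖ ^ 2 := by
  obtain ⟨hκ0, hκ6⟩ := hκθ
  have hD : (0:ℝ) < L_H / 2 + σb + εg / 6 + L_l / 6 := by positivity
  rw [div_le_iff₀ hD]
  have ht0 : (0:ℝ) ≤ ‖η‖ := norm_nonneg _
  have hts : ‖η‖ ≤ ‖η‖ ^ 2 := by nlinarith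
  have hP : εg - δg ≤ ‖P‖ := by linarith
  have hc : κθ * ‖G‖ ≤ κθ * (δg + L_l * ‖η‖ + ‖P‖) :=
    mul_le_mul_of_nonneg_left h2 hκ0.le
  have hA : (1 - κθ) * ‖P‖ ≤ (1 + κθ) * δg + (δH + κθ * L_l) * ‖η‖ +
      (L_H / 2 + σb) * ‖η‖ ^ 2 := by nlinarith [h1, h3, hc]
  have hB : (1 - κθ) * (εg - δg) ≤ (1 - κθ) * ‖P‖ :=
    mul_le_mul_of_nonneg_left hP (by linarith)
  have hεκ : κθ * εg ≤ εg / 6 := by nlinarith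
  have hδg6 : δg ≤ εg / 6 := le_trans (hδ.trans hδH) hεκ
  have hδHt : δH * ‖η‖ ≤ εg / 6 * ‖η‖ ^ 2 := by
    calc δH * ‖η‖ ≤ (εg / 6) * ‖η‖ :=
          mul_le_mul_of_nonneg_right (hδH.trans hεκ) ht0
      _ ≤ εg / 6 * ‖η‖ ^ 2 := by nlinarith
  have hLlt : κθ * L_l * ‖η‖ ≤ L_l / 6 * ‖η‖ ^ 2 := by
    have : κθ * L_l ≤ L_l / 6 := by nlinarith
    calc κθ * L_l * ‖η‖ ≤ (L_l / 6) * ‖η‖ :=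
          mul_le_mul_of_nonneg_right this ht0
      _ ≤ L_l / 6 * ‖η‖ ^ 2 := by nlinarith
  have hκδ : κθ * δg ≤ εg / 6 := by
    have h := mul_le_mul_of_nonneg_left hδg6 hκ0.le
    nlinarith [hεκ]
  linarith [hA, hB, hδHt, hLlt, hδg6, hεκ]
end
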